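/- Let N ≥ 1, s ∈ (1/2, 1), γ ∈ [0, 1), C₀ > 0, and let Ω ⊂ ℝ^N be a bounded domain with C² boundary. There exist C > 0 and ρ₀ > 0, depending on N, s, γ, C₀ and Ω, such that for every ρ ∈ (0, ρ₀), every measurable u : Ω → ℝ with 0 ≤ u(z) ≤ C₀ d(z)^{−γ} for all z ∈ Ω, and every x ∈ Ω with d(x) > 2ρ, one has C_{N,s} ∫_{{z ∈ Ω : d(z) ≤ ρ}} u(z) |z − x|^{−(N+2s)} dz ≤ C ρ^{−γ−2s}. -/

import Mathlib

/-!
Every point of the strip `{d ≤ ρ}` lies at distance at least `ρ` from `x` because `d(x) > 2ρ`.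
Cut the strip into the dyadic layers `ρ/2^(j+1) < d ≤ ρ/2^j` and the dyadic shells
`ρ 2^k ≤ |z - x| ≤ ρ 2^(k+1)`. The geometric input is the tube estimate
`|{d ≤ t} ∩ B_r| ≲ t r^(N-1)`: near a boundary point `∂Ω` is a regular level set of a `C²`
function `φ`, so `{d ≤ t}` lies in the slab `{|φ| ≲ t}`, which every line in a direction
transversal to `∂Ω` meets in a segment of length `≲ t`; compactness of `∂Ω` makes this uniform.
Summing over the layers gives `∫_{{d ≤ ρ} ∩ B_r} d^(-γ) ≲ ρ^(1-γ) r^(N-1)` (a geometric series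
because `γ < 1`), and summing over the shells gives `ρ^(1-γ) ρ^(-1-2s) = ρ^(-γ-2s)` (geometric
because `1 + 2s > 0`).
-/

open Filter MeasureTheory Metric Set Topology

noncomputable section

/-- Euclidean space ℝ^N. -/
abbrev EucN (N : ℕ) := EuclideanSpace ℝ (Fin N)

/-- The standard normalizing constant of the fractional Laplacian on ℝ^N. -/
noncomputable def CNs (N : ℕ) (s : ℝ) : ℝ :=
  4 ^ s * Real.Gamma ((N : ℝ) / 2 + s) / (Real.pi ^ ((N : ℝ) / 2) * |Real.Gamma (-s)|)

/-- Distance to the boundary of `Ω`. -/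
noncomputable def bdist {N : ℕ} (Ω : Set (EucN N)) (x : EucN N) : ℝ :=
  Metric.infDist x (frontier Ω)

/-- The set `Ω_δ = {x ∈ Ω : d(x) > δ}`. -/
def innerSet {N : ℕ} (Ω : Set (EucN N)) (δ : ℝ) : Set (EucN N) :=
  {x ∈ Ω | δ < bdist Ω x}

/-- The filter of points of `Ω` whose distance to `∂Ω` tends to `0⁺`. -/
def toBoundary {N : ℕ} (Ω : Set (EucN N)) : Filter (EucN N) :=
  Filter.comap (bdist Ω) (nhdsWithin 0 (Set.Ioi 0)) ⊓ Filter.principal Ω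

/-- Principal value of `∫_A F` with singularity at `x₀` converging to `L`. -/
def HasPVAt {N : ℕ} (A : Set (EucN N)) (x₀ : EucN N) (F : EucN N → ℝ) (L : ℝ) : Prop :=
  Tendsto (fun ε : ℝ => ∫ z in A \ Metric.ball x₀ ε, F z) (nhdsWithin 0 (Set.Ioi 0)) (nhds L)

/-- The principal value of `∫_A F` with singularity at `x₀` (junk value if divergent). -/
noncomputable def pvAt {N : ℕ} (A : Set (EucN N)) (x₀ : EucN N) (F : EucN N → ℝ) : ℝ :=
  limUnder (nhdsWithin (0 : ℝ) (Set.Ioi 0))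
    (fun ε : ℝ => ∫ z in A \ Metric.ball x₀ ε, F z)

/-- The kernel `z ↦ (u z − u x)/|x − z|^{N+2s}`. -/
noncomputable def csKernel {N : ℕ} (s : ℝ) (u : EucN N → ℝ) (x z : EucN N) : ℝ :=
  (u z - u x) / dist x z ^ ((N : ℝ) + 2 * s)

/-- The censored fractional Laplacian `(−Δ)_Ω^s u (x)`. -/
noncomputable def censoredLap {N : ℕ} (Ω : Set (EucN N)) (s : ℝ) (u : EucN N → ℝ)
    (x : EucN N) : ℝ :=
  -CNs N s * pvAt Ω x (csKernel s u x)

/-- The principal value defining `(−Δ)_Ω^s u (x)` converges. -/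
def CensoredLapDefined {N : ℕ} (Ω : Set (EucN N)) (s : ℝ) (u : EucN N → ℝ)
    (x : EucN N) : Prop :=
  ∃ L : ℝ, HasPVAt Ω x (csKernel s u x) L

/-- `Ω` has `C²` boundary: local level-set description by `C²` defining functions. -/
def HasC2Boundary {N : ℕ} (Ω : Set (EucN N)) : Prop :=
  ∀ x ∈ frontier Ω, ∃ (U : Set (EucN N)) (φ : EucN N → ℝ),
    IsOpen U ∧ x ∈ U ∧ ContDiffOn ℝ 2 φ U ∧ (∀ y ∈ U, fderiv ℝ φ y ≠ 0) ∧
    Ω ∩ U = {y ∈ U | φ y < 0} ∧ frontier Ω ∩ U = {y ∈ U | φ y = 0}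

/-- Bounded domain with `C²` boundary. -/
def IsBoundedC2Domain {N : ℕ} (Ω : Set (EucN N)) : Prop :=
  IsOpen Ω ∧ IsConnected Ω ∧ Bornology.IsBounded Ω ∧ HasC2Boundary Ω

/-- Evaluation of the censored operator on a test function `φ` near `x₀` and on `u` far away. -/
noncomputable def testEval {N : ℕ} (Ω : Set (EucN N)) (s : ℝ) (u φ : EucN N → ℝ)
    (x₀ : EucN N) (r : ℝ) : ℝ :=
  -CNs N s * (pvAt (Metric.ball x₀ r) x₀ (csKernel s φ x₀)
    + ∫ z in Ω \ Metric.ball x₀ r, csKernel s u x₀ z)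

/-- Viscosity subsolution of `lam·u + (−Δ)_Ω^s u + T·|Du|^m = f` in `Ω'`. -/
def IsViscositySubsol {N : ℕ} (Ω Ω' : Set (EucN N)) (s lam T mexp : ℝ)
    (f u : EucN N → ℝ) : Prop :=
  ∀ x₀ ∈ Ω', ∀ r : ℝ, 0 < r → Metric.ball x₀ r ⊆ Ω' →
    ∀ φ : EucN N → ℝ, ContDiffOn ℝ 2 φ (Metric.ball x₀ r) →
      φ x₀ = u x₀ → (∀ y ∈ Metric.ball x₀ r, u y ≤ φ y) →
      lam * u x₀ + testEval Ω s u φ x₀ r + T * ‖fderiv ℝ φ x₀‖ ^ mexp ≤ f x₀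

/-- Viscosity supersolution of `lam·u + (−Δ)_Ω^s u + T·|Du|^m = f` in `Ω'`. -/
def IsViscositySupersol {N : ℕ} (Ω Ω' : Set (EucN N)) (s lam T mexp : ℝ)
    (f u : EucN N → ℝ) : Prop :=
  ∀ x₀ ∈ Ω', ∀ r : ℝ, 0 < r → Metric.ball x₀ r ⊆ Ω' →
    ∀ φ : EucN N → ℝ, ContDiffOn ℝ 2 φ (Metric.ball x₀ r) →
      φ x₀ = u x₀ → (∀ y ∈ Metric.ball x₀ r, φ y ≤ u y) →
      f x₀ ≤ lam * u x₀ + testEval Ω s u φ x₀ r + T * ‖fderiv ℝ φ x₀‖ ^ mexp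

/-- Viscosity solution. -/
def IsViscositySol {N : ℕ} (Ω Ω' : Set (EucN N)) (s lam T mexp : ℝ)
    (f u : EucN N → ℝ) : Prop :=
  IsViscositySubsol Ω Ω' s lam T mexp f u ∧ IsViscositySupersol Ω Ω' s lam T mexp f u

/-- Strict viscosity subsolution. -/
def IsStrictViscositySubsol {N : ℕ} (Ω Ω' : Set (EucN N)) (s lam T mexp : ℝ)
    (f u : EucN N → ℝ) : Prop :=
  ∀ x₀ ∈ Ω', ∀ r : ℝ, 0 < r → Metric.ball x₀ r ⊆ Ω' →
    ∀ φ : EucN N → ℝ, ContDiffOn ℝ 2 φ (Metric.ball x₀ r) →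
      φ x₀ = u x₀ → (∀ y ∈ Metric.ball x₀ r, u y ≤ φ y) →
      lam * u x₀ + testEval Ω s u φ x₀ r + T * ‖fderiv ℝ φ x₀‖ ^ mexp < f x₀

/-- Strict viscosity supersolution. -/
def IsStrictViscositySupersol {N : ℕ} (Ω Ω' : Set (EucN N)) (s lam T mexp : ℝ)
    (f u : EucN N → ℝ) : Prop :=
  ∀ x₀ ∈ Ω', ∀ r : ℝ, 0 < r → Metric.ball x₀ r ⊆ Ω' →
    ∀ φ : EucN N → ℝ, ContDiffOn ℝ 2 φ (Metric.ball x₀ r) →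
      φ x₀ = u x₀ → (∀ y ∈ Metric.ball x₀ r, φ y ≤ u y) →
      f x₀ < lam * u x₀ + testEval Ω s u φ x₀ r + T * ‖fderiv ℝ φ x₀‖ ^ mexp

/-- Local Hölder regularity of order `θ ∈ (k, k+1]`: `u ∈ C^{k,θ−k}_loc(Ω)`. -/
def CHolderLoc {N : ℕ} (θ : ℝ) (Ω : Set (EucN N)) (u : EucN N → ℝ) : Prop :=
  ∃ k : ℕ, (k : ℝ) < θ ∧ θ ≤ (k : ℝ) + 1 ∧ ContDiffOn ℝ k u Ω ∧
    ∀ K : Set (EucN N), IsCompact K → K ⊆ Ω → ∃ C > 0, ∀ x ∈ K, ∀ y ∈ K,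
      ‖iteratedFDerivWithin ℝ k u Ω x - iteratedFDerivWithin ℝ k u Ω y‖
        ≤ C * dist x y ^ (θ - k)

/-- `f` is locally Hölder continuous in `Ω`. -/
def LocHolder {N : ℕ} (Ω : Set (EucN N)) (f : EucN N → ℝ) : Prop :=
  ∃ θ : ℝ, θ ∈ Set.Ioc (0 : ℝ) 1 ∧ ∀ K : Set (EucN N), IsCompact K → K ⊆ Ω →
    ∃ C > 0, ∀ x ∈ K, ∀ y ∈ K, |f x - f y| ≤ C * dist x y ^ θ

/-- The boundary profile `g_γ`. -/
noncomputable def ggam {N : ℕ} (Ω : Set (EucN N)) (γ : ℝ) (x : EucN N) : ℝ :=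
  if 0 < γ then bdist Ω x ^ (-γ) else -Real.log (bdist Ω x)

/-- `v` is in the `γ`-class: `−∞ < liminf v/g_γ ≤ limsup v/g_γ < +∞` at `∂Ω`. -/
def InGammaClass {N : ℕ} (Ω : Set (EucN N)) (γ : ℝ) (v : EucN N → ℝ) : Prop :=
  (∃ a : ℝ, ∀ᶠ x in toBoundary Ω, a ≤ v x / ggam Ω γ x) ∧
  (∃ b : ℝ, ∀ᶠ x in toBoundary Ω, v x / ggam Ω γ x ≤ b)

/-- `u` blows up at `∂Ω`. -/
def BlowsUp {N : ℕ} (Ω : Set (EucN N)) (u : EucN N → ℝ) : Prop :=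
  Tendsto u (toBoundary Ω) atTop

/-- The assumption `d(x)^{γ+2s} f(x) → C₁` as `d(x) → 0⁺`. -/
def BoundaryRate {N : ℕ} (Ω : Set (EucN N)) (s γ : ℝ) (f : EucN N → ℝ) (C₁ : ℝ) : Prop :=
  Tendsto (fun x => bdist Ω x ^ (γ + 2 * s) * f x) (toBoundary Ω) (nhds C₁)

/-- The constant `c(N,s,β)`, a principal value over `{(t,y') : t > −1}`. -/
noncomputable def cBeta (N : ℕ) [NeZero N] (s β : ℝ) : ℝ :=
  CNs N s * pvAt {w : EucN N | -1 < w 0} 0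
    (fun w => ((1 + w 0) ^ β - 1) / ‖w‖ ^ ((N : ℝ) + 2 * s))

/-- The constant `c(N,s)` of the logarithmic barrier. -/
noncomputable def cLog (N : ℕ) [NeZero N] (s : ℝ) : ℝ :=
  CNs N s * pvAt {w : EucN N | -1 < w 0} 0
    (fun w => Real.log (1 + w 0) / ‖w‖ ^ ((N : ℝ) + 2 * s))

/-- `C₀` is a positive root of the equation defining the main blow-up constant. -/
def IsBlowUpConstant (N : ℕ) [NeZero N] (s m γ C₁ C₀ : ℝ) : Prop :=
  0 < C₀ ∧
  (m < 2 * s → -C₀ * cBeta N s γ + γ ^ m * C₀ ^ m - C₁ = 0) ∧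
  (m = 2 * s → -C₀ * cLog N s + C₀ ^ (2 * s) - C₁ = 0)

/-- Minimal large (blow-up) viscosity solution of `lam·u + (−Δ)_Ω^s u + |Du|^m = f` in `Ω`. -/
def IsMinimalLargeSol {N : ℕ} (Ω : Set (EucN N)) (s lam mexp : ℝ)
    (f u : EucN N → ℝ) : Prop :=
  ContinuousOn u Ω ∧ IsViscositySol Ω Ω s lam 1 mexp f u ∧ BlowsUp Ω u ∧
  ∀ v : EucN N → ℝ, ContinuousOn v Ω → IsViscositySol Ω Ω s lam 1 mexp f v →
    BlowsUp Ω v → ∀ x ∈ Ω, u x ≤ v x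

open scoped ENNReal

def boundaryLayer {N : ℕ} (Ω : Set (EucN N)) (t : ℝ) : Set (EucN N) :=
  {z ∈ Ω | bdist Ω z ≤ t}

section DirectionalDerivative

variable {F : Type*} [NormedAddCommGroup F] [NormedSpace ℝ F]

lemma exists_norm_eq_one_apply_pos {ℓ : F →L[ℝ] ℝ} (hℓ : ℓ ≠ 0) :
    ∃ e : F, ‖e‖ = 1 ∧ 0 < ℓ e := by
  obtain ⟨v, hv⟩ := DFunLike.ne_iff.1 hℓ
  set w := (ℓ v)⁻¹ • v
  have hw : ℓ w = 1 := by simp [w, inv_mul_cancel₀ hv]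
  have hw0 : w ≠ 0 := fun h => by simp [h] at hw
  refine ⟨‖w‖⁻¹ • w, norm_smul_inv_norm hw0, ?_⟩
  rw [map_smul, hw, smul_eq_mul, mul_one]
  exact inv_pos.2 (norm_pos_iff.2 hw0)

lemma exists_closedBall_forall_le_fderiv_apply {φ : F → ℝ} {U : Set F} (hU : IsOpen U)
    (hφ : ContDiffOn ℝ 1 φ U) {p : F} (hp : p ∈ U) (hDp : fderiv ℝ φ p ≠ 0) :
    ∃ e : F, ‖e‖ = 1 ∧ ∃ c > 0, ∃ L > 0, ∃ ε > 0, ∀ y ∈ closedBall p ε,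
      y ∈ U ∧ DifferentiableAt ℝ φ y ∧ c ≤ fderiv ℝ φ y e ∧ ‖fderiv ℝ φ y‖ ≤ L := by
  obtain ⟨e, he, hpe⟩ := exists_norm_eq_one_apply_pos hDp
  have hcont : ContinuousAt (fderiv ℝ φ) p :=
    (hφ.continuousOn_fderiv_of_isOpen hU le_rfl).continuousAt (hU.mem_nhds hp)
  have hev : ∀ᶠ y in 𝓝 p, y ∈ U ∧ fderiv ℝ φ p e / 2 ≤ fderiv ℝ φ y e ∧
      ‖fderiv ℝ φ y‖ ≤ ‖fderiv ℝ φ p‖ + 1 :=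
    Filter.Eventually.and (hU.mem_nhds hp) <|
      ((hcont.clm_apply continuousAt_const).eventually
        (eventually_ge_nhds (half_lt_self hpe))).and
      (hcont.norm.eventually (eventually_le_nhds (lt_add_one _)))
  obtain ⟨ε, hε, hball⟩ := nhds_basis_closedBall.eventually_iff.1 hev
  refine ⟨e, he, _, half_pos hpe, ‖fderiv ℝ φ p‖ + 1, by positivity, ε, hε, fun y hy => ?_⟩
  obtain ⟨hyU, hye, hyL⟩ := hball hy
  exact ⟨hyU, (hφ.differentiableOn one_ne_zero y hyU).differentiableAt (hU.mem_nhds hyU),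
    hye, hyL⟩

lemma mul_le_sub_of_le_fderiv_apply {φ : F → ℝ} {D : Set F} (hD : Convex ℝ D)
    (hφ : ∀ y ∈ D, DifferentiableAt ℝ φ y) {e : F} {c : ℝ}
    (hc : ∀ y ∈ D, c ≤ fderiv ℝ φ y e) {z : F} (hz : z ∈ D) {τ : ℝ} (hτ : 0 ≤ τ)
    (hzτ : z + τ • e ∈ D) :
    c * τ ≤ φ (z + τ • e) - φ z := by
  set line : ℝ → F := fun σ => z + σ • e
  have hline : line = AffineMap.lineMap z (z + e) := by
    funext σ
    simp [line, AffineMap.lineMap_apply, add_comm]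
  have hderiv : ∀ σ ∈ line ⁻¹' D, HasDerivAt (φ ∘ line) (fderiv ℝ φ (line σ) e) σ :=
    fun σ hσ => (hφ _ hσ).hasFDerivAt.comp_hasDerivAt σ
      ((((hasDerivAt_id σ).smul_const e).const_add z).congr_deriv (one_smul ℝ e))
  have hconv : Convex ℝ (line ⁻¹' D) := hline ▸ hD.affine_preimage _
  have := hconv.mul_sub_le_image_sub_of_le_deriv
    (fun σ hσ => (hderiv σ hσ).continuousAt.continuousWithinAt)
    (fun σ hσ => (hderiv σ (interior_subset hσ)).differentiableAt.differentiableWithinAt)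
    (fun σ hσ => by
      rw [(hderiv σ (interior_subset hσ)).deriv]
      exact hc _ (interior_subset (s := line ⁻¹' D) hσ))
    0 (by simpa [line] using hz) τ hzτ hτ
  simpa [line] using this

end DirectionalDerivative

lemma prod_volume_le_of_fiber_dist_le {β : Type*} [MeasurableSpace β] (μ : Measure β)
    [SFinite μ] {S : Set (ℝ × β)} (hS : MeasurableSet S) (T : Set β) (hST : ∀ p ∈ S, p.2 ∈ T)
    {h : ℝ} (hfiber : ∀ y τ₁ τ₂, (τ₁, y) ∈ S → (τ₂, y) ∈ S → |τ₁ - τ₂| ≤ h) :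
    (volume.prod μ) S ≤ ENNReal.ofReal h * μ T := by
  have hslice : ∀ y, volume ((fun τ => (τ, y)) ⁻¹' S) ≤
      T.indicator (fun _ => ENNReal.ofReal h) y := by
    intro y
    by_cases hy : y ∈ T
    · rw [indicator_of_mem hy]
      refine (Real.volume_le_diam _).trans (ediam_le fun τ₁ h₁ τ₂ h₂ => ?_)
      rw [edist_dist, Real.dist_eq]
      exact ENNReal.ofReal_le_ofReal (hfiber y τ₁ τ₂ h₁ h₂)
    · have : (fun τ => (τ, y)) ⁻¹' S = ∅ :=
        eq_empty_of_forall_notMem fun τ hτ => hy (hST _ hτ)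
      simp [this]
  calc (volume.prod μ) S = ∫⁻ y, volume ((fun τ => (τ, y)) ⁻¹' S) ∂μ :=
        Measure.prod_apply_symm hS
    _ ≤ ∫⁻ y, T.indicator (fun _ => ENNReal.ofReal h) y ∂μ := lintegral_mono hslice
    _ ≤ ENNReal.ofReal h * μ T := lintegral_indicator_const_le T _

section Slabs

variable {E : Type*} [NormedAddCommGroup E] [InnerProductSpace ℝ E]

lemma exists_orthonormalBasis_zero_eq [FiniteDimensional ℝ E] {n : ℕ}
    (hE : Module.finrank ℝ E = n + 1) {e : E} (he : ‖e‖ = 1) :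
    ∃ b : OrthonormalBasis (Fin (n + 1)) ℝ E, b 0 = e := by
  have hon : Orthonormal ℝ (({0} : Set (Fin (n + 1))).domRestrict fun _ => e) :=
    orthonormal_subsingleton_iff.2 fun _ => he
  obtain ⟨b, hb⟩ := hon.exists_orthonormalBasis_extension_of_card_eq (by simpa using hE)
  exact ⟨b, hb 0 rfl⟩

variable [MeasurableSpace E] [BorelSpace E]

def OrthonormalBasis.splitFirst {n : ℕ} (b : OrthonormalBasis (Fin (n + 1)) ℝ E) :
    E ≃ᵐ ℝ × (Fin n → ℝ) :=
  b.repr.toMeasurableEquiv.trans <| (MeasurableEquiv.toLp 2 (Fin (n + 1) → ℝ)).symm.trans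
    (MeasurableEquiv.piFinSuccAbove (fun _ => ℝ) 0)

namespace OrthonormalBasis

variable {n : ℕ} (b : OrthonormalBasis (Fin (n + 1)) ℝ E)

lemma splitFirst_apply (z : E) : b.splitFirst z = (b.repr z 0, fun i => b.repr z i.succ) :=
  rfl

lemma measurePreserving_splitFirst [FiniteDimensional ℝ E] :
    MeasurePreserving b.splitFirst volume (volume.prod volume) :=
  ((volume_preserving_piFinSuccAbove (fun _ => ℝ) 0).comp
    (EuclideanSpace.volume_preserving_symm_measurableEquiv_toLp _)).comp b.measurePreserving_repr

lemma dist_splitFirst_snd_le (z x : E) :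
    dist (b.splitFirst z).2 (b.splitFirst x).2 ≤ dist z x :=
  (dist_pi_le_iff dist_nonneg).2 fun _ =>
    (PiLp.dist_apply_le _ _ _).trans_eq (b.repr.dist_map z x)

lemma eq_add_smul_of_splitFirst_snd_eq {z₁ z₂ : E}
    (h : (b.splitFirst z₁).2 = (b.splitFirst z₂).2) :
    z₁ = z₂ + ((b.splitFirst z₁).1 - (b.splitFirst z₂).1) • b 0 := by
  rw [← sub_eq_iff_eq_add']
  apply b.repr.injective
  ext i
  refine Fin.cases ?_ (fun i => ?_) i
  · simp [splitFirst_apply]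
  · simpa [splitFirst_apply, sub_eq_zero] using congrFun h i

end OrthonormalBasis

lemma volume_le_of_segment_le [FiniteDimensional ℝ E] {n : ℕ}
    (hE : Module.finrank ℝ E = n + 1) {S : Set E} (hS : MeasurableSet S) {x : E} {r : ℝ}
    (hSx : S ⊆ closedBall x r) {e : E} (he : ‖e‖ = 1) {h : ℝ}
    (hseg : ∀ z ∈ S, ∀ τ : ℝ, 0 ≤ τ → z + τ • e ∈ S → τ ≤ h) :
    volume S ≤ ENNReal.ofReal h * ENNReal.ofReal (2 * r) ^ n := by
  rcases lt_or_ge r 0 with hr | hr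
  · simp [subset_empty_iff.1 (hSx.trans (closedBall_eq_empty.2 hr).le)]
  obtain ⟨b, rfl⟩ := exists_orthonormalBasis_zero_eq hE he
  have hvol : volume (closedBall (b.splitFirst x).2 r) = ENNReal.ofReal (2 * r) ^ n := by
    rw [Real.volume_pi_closedBall _ hr, Fintype.card_fin, ENNReal.ofReal_pow (by positivity)]
  rw [← b.measurePreserving_splitFirst.symm.measure_preimage_equiv S, ← hvol]
  refine prod_volume_le_of_fiber_dist_le _ (b.splitFirst.symm.measurable hS) _
    (fun p hp => ?_) fun y τ₁ τ₂ h₁ h₂ => ?_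
  · simpa only [b.splitFirst.apply_symm_apply, mem_closedBall] using
      (b.dist_splitFirst_snd_le _ x).trans (hSx hp)
  · wlog hτ : τ₂ ≤ τ₁ generalizing τ₁ τ₂
    · rw [abs_sub_comm]
      exact this τ₂ τ₁ h₂ h₁ (le_of_not_ge hτ)
    have hline := b.eq_add_smul_of_splitFirst_snd_eq
      (z₁ := b.splitFirst.symm (τ₁, y)) (z₂ := b.splitFirst.symm (τ₂, y))
      (by simp only [MeasurableEquiv.apply_symm_apply])
    simp only [MeasurableEquiv.apply_symm_apply] at hline
    rw [abs_of_nonneg (sub_nonneg.2 hτ)]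
    exact hseg _ h₂ _ (sub_nonneg.2 hτ) (hline ▸ h₁)

lemma volume_abs_le_inter_closedBall_le [FiniteDimensional ℝ E] {n : ℕ}
    (hE : Module.finrank ℝ E = n + 1) {φ : E → ℝ} {p e : E} (he : ‖e‖ = 1) {ε c : ℝ}
    (hc : 0 < c) (hφ : ∀ y ∈ closedBall p ε, DifferentiableAt ℝ φ y ∧ c ≤ fderiv ℝ φ y e)
    (δ : ℝ) (x : E) (r : ℝ) :
    volume ({z ∈ closedBall p ε | |φ z| ≤ δ} ∩ closedBall x r) ≤
      ENNReal.ofReal (2 * δ / c) * ENNReal.ofReal (2 * r) ^ n := by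
  have hclosed : IsClosed {z ∈ closedBall p ε | |φ z| ≤ δ} :=
    ContinuousOn.preimage_isClosed_of_isClosed
      (fun y hy => (hφ y hy).1.continuousAt.abs.continuousWithinAt) isClosed_closedBall
      isClosed_Iic
  refine volume_le_of_segment_le hE (hclosed.inter isClosed_closedBall).measurableSet
    inter_subset_right he fun z hz τ hτ hzτ => ?_
  have := mul_le_sub_of_le_fderiv_apply (convex_closedBall p ε) (fun y hy => (hφ y hy).1)
    (fun y hy => (hφ y hy).2) hz.1.1 hτ hzτ.1.1
  rw [le_div_iff₀ hc]
  linarith [abs_le.1 hz.1.2, abs_le.1 hzτ.1.2]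

end Slabs

lemma Bornology.IsBounded.isCompact_frontier {α : Type*} [PseudoMetricSpace α] [ProperSpace α]
    {s : Set α} (hs : Bornology.IsBounded s) : IsCompact (frontier s) :=
  isCompact_of_isClosed_isBounded isClosed_frontier (hs.closure.subset frontier_subset_closure)

lemma Bornology.IsBounded.frontier_nonempty {F : Type*} [NormedAddCommGroup F]
    [NormedSpace ℝ F] [Nontrivial F] {s : Set F} (hs : Bornology.IsBounded s)
    (hne : s.Nonempty) : (frontier s).Nonempty :=
  nonempty_frontier_iff.2 ⟨hne, fun h => NormedSpace.unbounded_univ ℝ F (h ▸ hs)⟩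

@[fun_prop]
lemma continuous_bdist {N : ℕ} (Ω : Set (EucN N)) : Continuous (bdist Ω) :=
  continuous_infDist_pt _

lemma bdist_pos {N : ℕ} {Ω : Set (EucN N)} (hΩ : IsOpen Ω) (hF : (frontier Ω).Nonempty)
    {z : EucN N} (hz : z ∈ Ω) : 0 < bdist Ω z :=
  (isClosed_frontier.notMem_iff_infDist_pos hF).1 fun h => (hΩ.frontier_eq ▸ h).2 hz

lemma exists_volume_boundaryLayer_inter_closedBall_le_of_mem_frontier {n : ℕ}
    {Ω : Set (EucN (n + 1))} (hΩ : HasC2Boundary Ω) {p : EucN (n + 1)} (hp : p ∈ frontier Ω) :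
    ∃ ε > 0, ∃ K > 0, ∀ t ≤ ε, ∀ x r,
      volume (boundaryLayer Ω t ∩ closedBall p ε ∩ closedBall x r) ≤
        ENNReal.ofReal (K * t) * ENNReal.ofReal (2 * r) ^ n := by
  obtain ⟨U, φ, hU, hpU, hφ, hgrad, -, hFU⟩ := hΩ p hp
  obtain ⟨e, he, c, hc, L, hL, ε, hε, hball⟩ :=
    exists_closedBall_forall_le_fderiv_apply hU (hφ.of_le one_le_two) hpU (hgrad p hpU)
  have hhalf : closedBall p (ε / 2) ⊆ closedBall p ε :=
    closedBall_subset_closedBall (half_le_self hε.le)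
  refine ⟨ε / 2, half_pos hε, 2 * L / c, by positivity, fun t ht x r => ?_⟩
  have hslab : boundaryLayer Ω t ∩ closedBall p (ε / 2) ⊆
      {z ∈ closedBall p (ε / 2) | |φ z| ≤ L * t} := by
    rintro z ⟨⟨-, hzt⟩, hzp⟩
    obtain ⟨q, hqF, hq⟩ := isClosed_frontier.exists_infDist_eq_dist ⟨p, hp⟩ z
    have hqp : q ∈ closedBall p ε := by
      rw [mem_closedBall] at hzp ⊢
      linarith [dist_triangle q z p, dist_comm q z, (hq ▸ hzt : dist z q ≤ t)]
    have hφq : φ q = 0 := (hFU.subset ⟨hqF, (hball q hqp).1⟩ : q ∈ {y ∈ U | φ y = 0}).2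
    have hlip := (convex_closedBall p ε).norm_image_sub_le_of_norm_fderiv_le
      (fun y hy => (hball y hy).2.1) (fun y hy => (hball y hy).2.2.2) hqp (hhalf hzp)
    rw [hφq, sub_zero, Real.norm_eq_abs, ← dist_eq_norm, ← hq] at hlip
    exact ⟨hzp, hlip.trans (mul_le_mul_of_nonneg_left hzt hL.le)⟩
  calc volume (boundaryLayer Ω t ∩ closedBall p (ε / 2) ∩ closedBall x r)
      ≤ volume ({z ∈ closedBall p (ε / 2) | |φ z| ≤ L * t} ∩ closedBall x r) :=
        measure_mono (inter_subset_inter_left _ hslab)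
    _ ≤ ENNReal.ofReal (2 * (L * t) / c) * ENNReal.ofReal (2 * r) ^ n :=
        volume_abs_le_inter_closedBall_le finrank_euclideanSpace_fin he hc
          (fun y hy => ⟨(hball y (hhalf hy)).2.1, (hball y (hhalf hy)).2.2.1⟩) _ x r
    _ = ENNReal.ofReal (2 * L / c * t) * ENNReal.ofReal (2 * r) ^ n := by ring_nf

lemma exists_volume_boundaryLayer_inter_closedBall_le {n : ℕ} {Ω : Set (EucN (n + 1))}
    (hΩ : HasC2Boundary Ω) (hF : IsCompact (frontier Ω)) (hFne : (frontier Ω).Nonempty) :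
    ∃ K > 0, ∃ t₀ > 0, ∀ t ∈ Icc 0 t₀, ∀ x r,
      volume (boundaryLayer Ω t ∩ closedBall x r) ≤
        ENNReal.ofReal (K * t) * ENNReal.ofReal (2 * r) ^ n := by
  choose ε hε K hK hlocal using fun p : frontier Ω =>
    exists_volume_boundaryLayer_inter_closedBall_le_of_mem_frontier hΩ p.2
  obtain ⟨s, hs⟩ := hF.elim_finite_subcover
    (fun p : frontier Ω => ball (p : EucN (n + 1)) (ε p / 2)) (fun _ => isOpen_ball)
    fun q hq => mem_iUnion.2 ⟨⟨q, hq⟩, mem_ball_self (half_pos (hε _))⟩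
  have hsne : s.Nonempty := by
    obtain ⟨q, hq⟩ := hFne
    obtain ⟨i, hi, -⟩ := mem_iUnion₂.1 (hs hq)
    exact ⟨i, hi⟩
  set t₀ := s.inf' hsne fun i => ε i / 2
  have ht₀ : ∀ i ∈ s, t₀ ≤ ε i / 2 := fun i hi => s.inf'_le _ hi
  refine ⟨∑ i ∈ s, K i, s.sum_pos (fun i _ => hK i) hsne, t₀,
    (s.lt_inf'_iff hsne).2 fun i _ => half_pos (hε i), fun t ht x r => ?_⟩
  have hcover : boundaryLayer Ω t ∩ closedBall x r ⊆
      ⋃ i ∈ s, boundaryLayer Ω t ∩ closedBall (i : EucN (n + 1)) (ε i) ∩ closedBall x r := by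
    rintro z ⟨hz, hzx⟩
    obtain ⟨q, hqF, hq⟩ := hF.exists_infDist_eq_dist hFne z
    obtain ⟨i, hi, hqi⟩ := mem_iUnion₂.1 (hs hqF)
    refine mem_iUnion₂.2 ⟨i, hi, ⟨hz, ?_⟩, hzx⟩
    rw [mem_ball] at hqi
    rw [mem_closedBall]
    linarith [dist_triangle z q i, (hq ▸ hz.2 : dist z q ≤ t), ht.2, ht₀ i hi]
  calc volume (boundaryLayer Ω t ∩ closedBall x r)
      ≤ ∑ i ∈ s, volume
          (boundaryLayer Ω t ∩ closedBall (i : EucN (n + 1)) (ε i) ∩ closedBall x r) :=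
        (measure_mono hcover).trans (measure_biUnion_finset_le _ _)
    _ ≤ ∑ i ∈ s, ENNReal.ofReal (K i * t) * ENNReal.ofReal (2 * r) ^ n :=
        Finset.sum_le_sum fun i hi => hlocal i t (by linarith [ht.2, ht₀ i hi, hε i]) x r
    _ = ENNReal.ofReal ((∑ i ∈ s, K i) * t) * ENNReal.ofReal (2 * r) ^ n := by
        rw [← Finset.sum_mul,
          ← ENNReal.ofReal_sum_of_nonneg fun i _ => mul_nonneg (hK i).le ht.1, ← Finset.sum_mul]

lemma exists_dyadic_layer {d ρ : ℝ} (hd : 0 < d) (hdρ : d ≤ ρ) :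
    ∃ j : ℕ, ρ / 2 ^ (j + 1) < d ∧ d ≤ ρ / 2 ^ j := by
  obtain ⟨j, hj, hj'⟩ := exists_nat_pow_near ((one_le_div hd).2 hdρ) one_lt_two
  rw [le_div_iff₀ hd, mul_comm] at hj
  rw [div_lt_iff₀ hd, mul_comm] at hj'
  exact ⟨j, (div_lt_iff₀ (by positivity)).2 hj', (le_div_iff₀ (by positivity)).2 hj⟩

lemma exists_dyadic_shell {r ρ : ℝ} (hρ : 0 < ρ) (hρr : ρ ≤ r) :
    ∃ k : ℕ, ρ * 2 ^ k ≤ r ∧ r ≤ ρ * 2 ^ (k + 1) := by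
  obtain ⟨k, hk, hk'⟩ := exists_nat_pow_near ((one_le_div hρ).2 hρr) one_lt_two
  rw [le_div_iff₀ hρ, mul_comm] at hk
  rw [div_lt_iff₀ hρ, mul_comm] at hk'
  exact ⟨k, hk, hk'.le⟩

lemma div_two_pow_rpow {ρ : ℝ} (hρ : 0 ≤ ρ) (j : ℕ) (α : ℝ) :
    (ρ / 2 ^ j) ^ α = ρ ^ α * ((2 : ℝ) ^ (-α)) ^ j := by
  rw [Real.div_rpow hρ (by positivity), ← Real.rpow_pow_comm zero_le_two,
    Real.rpow_neg zero_le_two, inv_pow, div_eq_mul_inv]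

lemma mul_two_pow_rpow {ρ : ℝ} (hρ : 0 ≤ ρ) (k : ℕ) (α : ℝ) :
    (ρ * 2 ^ k) ^ α = ρ ^ α * ((2 : ℝ) ^ α) ^ k := by
  rw [Real.mul_rpow hρ (by positivity), ← Real.rpow_pow_comm zero_le_two]

section Dyadic

variable {α : Type*} [MeasurableSpace α] {μ : Measure α}

lemma setLIntegral_le_of_forall_le_geometric {f : α → ℝ≥0∞} {A : Set α} (P : ℕ → Set α)
    (hA : A ⊆ ⋃ k, P k) {c q : ℝ} (hc : 0 ≤ c) (hq₀ : 0 ≤ q) (hq₁ : q < 1)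
    (hP : ∀ k, ∫⁻ z in P k, f z ∂μ ≤ ENNReal.ofReal (c * q ^ k)) :
    ∫⁻ z in A, f z ∂μ ≤ ENNReal.ofReal (c / (1 - q)) := by
  have hsum : Summable fun k : ℕ => c * q ^ k :=
    (summable_geometric_of_lt_one hq₀ hq₁).mul_left c
  calc ∫⁻ z in A, f z ∂μ ≤ ∫⁻ z in ⋃ k, P k, f z ∂μ := lintegral_mono_set hA
    _ ≤ ∑' k, ∫⁻ z in P k, f z ∂μ := lintegral_iUnion_le _ _
    _ ≤ ∑' k, ENNReal.ofReal (c * q ^ k) := ENNReal.tsum_le_tsum hP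
    _ = ENNReal.ofReal (c / (1 - q)) := by
      rw [← ENNReal.ofReal_tsum_of_nonneg (fun k => by positivity) hsum, tsum_mul_left,
        tsum_geometric_of_lt_one hq₀ hq₁, div_eq_mul_inv]

lemma setLIntegral_rpow_neg_le {d : α → ℝ} {A : Set α} {ρ γ M : ℝ} (hρ : 0 < ρ)
    (hγ : γ ∈ Ico 0 1) (hM : 0 ≤ M) (hdA : ∀ z ∈ A, 0 < d z ∧ d z ≤ ρ)
    (hlevel : ∀ t ∈ Ioc 0 ρ, μ {z ∈ A | d z ≤ t} ≤ ENNReal.ofReal (M * t)) :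
    ∫⁻ z in A, ENNReal.ofReal (d z ^ (-γ)) ∂μ ≤
      ENNReal.ofReal (2 ^ γ * M * ρ ^ (1 - γ) / (1 - 2 ^ (γ - 1))) := by
  set P : ℕ → Set α := fun j => {z ∈ A | ρ / 2 ^ (j + 1) < d z ∧ d z ≤ ρ / 2 ^ j}
  refine setLIntegral_le_of_forall_le_geometric P (fun z hz => mem_iUnion.2
      ((exists_dyadic_layer (hdA z hz).1 (hdA z hz).2).imp fun _ => And.intro hz))
    (by positivity) (by positivity)
    (Real.rpow_lt_one_of_one_lt_of_neg one_lt_two (by linarith [hγ.2])) fun j => ?_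
  have hpt : ∀ z ∈ P j, ENNReal.ofReal (d z ^ (-γ)) ≤
      ENNReal.ofReal ((ρ / 2 ^ (j + 1)) ^ (-γ)) := fun z hz =>
    ENNReal.ofReal_le_ofReal
      (Real.rpow_le_rpow_of_nonpos (by positivity) hz.2.1.le (neg_nonpos.2 hγ.1))
  calc ∫⁻ z in P j, ENNReal.ofReal (d z ^ (-γ)) ∂μ
      ≤ ENNReal.ofReal ((ρ / 2 ^ (j + 1)) ^ (-γ)) * μ (P j) :=
        (setLIntegral_mono measurable_const hpt).trans_eq (setLIntegral_const _ _)
    _ ≤ ENNReal.ofReal ((ρ / 2 ^ (j + 1)) ^ (-γ)) * μ {z ∈ A | d z ≤ ρ / 2 ^ j} := by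
        gcongr
        exact fun z hz => ⟨hz.1, hz.2.2⟩
    _ ≤ ENNReal.ofReal ((ρ / 2 ^ (j + 1)) ^ (-γ)) * ENNReal.ofReal (M * (ρ / 2 ^ j)) := by
        gcongr
        exact hlevel _ ⟨by positivity, div_le_self hρ.le (one_le_pow₀ one_le_two)⟩
    _ = ENNReal.ofReal (2 ^ γ * M * ρ ^ (1 - γ) * (2 ^ (γ - 1)) ^ j) := by
        rw [← ENNReal.ofReal_mul (by positivity), div_two_pow_rpow hρ.le, neg_neg,
          sub_eq_neg_add, Real.rpow_add_one hρ.ne', sub_eq_add_neg, Real.rpow_add two_pos,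
          Real.rpow_neg_one, mul_pow, inv_pow, div_eq_mul_inv]
        ring_nf

lemma setLIntegral_mul_dist_rpow_neg_le [PseudoMetricSpace α] {f : α → ℝ≥0∞}
    (hf : Measurable f) {A : Set α} {x : α} {n : ℕ} {ρ β M : ℝ} (hρ : 0 < ρ) (hβ : 0 < β)
    (hM : 0 ≤ M) (hAx : ∀ z ∈ A, ρ ≤ dist z x)
    (hball : ∀ r, ρ ≤ r → ∫⁻ z in A ∩ closedBall x r, f z ∂μ ≤ ENNReal.ofReal (M * r ^ n)) :
    ∫⁻ z in A, f z * ENNReal.ofReal (dist z x ^ (-(n + β))) ∂μ ≤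
      ENNReal.ofReal (2 ^ n * M * ρ ^ (-β) / (1 - 2 ^ (-β))) := by
  set P : ℕ → Set α := fun k => {z ∈ A | ρ * 2 ^ k ≤ dist z x ∧ dist z x ≤ ρ * 2 ^ (k + 1)}
  refine setLIntegral_le_of_forall_le_geometric P (fun z hz => mem_iUnion.2
      ((exists_dyadic_shell hρ (hAx z hz)).imp fun _ => And.intro hz))
    (by positivity) (by positivity)
    (Real.rpow_lt_one_of_one_lt_of_neg one_lt_two (by linarith)) fun k => ?_
  have hpt : ∀ z ∈ P k, f z * ENNReal.ofReal (dist z x ^ (-(n + β))) ≤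
      f z * ENNReal.ofReal ((ρ * 2 ^ k) ^ (-(n + β))) := fun z hz =>
    mul_le_mul_right (ENNReal.ofReal_le_ofReal
      (Real.rpow_le_rpow_of_nonpos (by positivity) hz.2.1 (neg_nonpos.2 (by positivity)))) _
  calc ∫⁻ z in P k, f z * ENNReal.ofReal (dist z x ^ (-(n + β))) ∂μ
      ≤ (∫⁻ z in P k, f z ∂μ) * ENNReal.ofReal ((ρ * 2 ^ k) ^ (-(n + β))) :=
        (setLIntegral_mono (hf.mul_const _) hpt).trans_eq (lintegral_mul_const _ hf)
    _ ≤ (∫⁻ z in A ∩ closedBall x (ρ * 2 ^ (k + 1)), f z ∂μ) *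
          ENNReal.ofReal ((ρ * 2 ^ k) ^ (-(n + β))) := by
        gcongr
        exact fun z hz => ⟨hz.1, mem_closedBall.2 hz.2.2⟩
    _ ≤ ENNReal.ofReal (M * (ρ * 2 ^ (k + 1)) ^ n) *
          ENNReal.ofReal ((ρ * 2 ^ k) ^ (-(n + β))) := by
        gcongr
        exact hball _ (le_mul_of_one_le_right hρ.le (one_le_pow₀ one_le_two))
    _ = ENNReal.ofReal (2 ^ n * M * ρ ^ (-β) * (2 ^ (-β)) ^ k) := by
        rw [← ENNReal.ofReal_mul (by positivity), mul_two_pow_rpow hρ.le, neg_add,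
          Real.rpow_add hρ, Real.rpow_add two_pos, Real.rpow_neg hρ.le,
          Real.rpow_neg zero_le_two, Real.rpow_natCast, Real.rpow_natCast]
        congr 1
        simp only [mul_pow, inv_pow]
        field_simp
        ring

end Dyadic

lemma setLIntegral_boundaryLayer_inter_closedBall_rpow_neg_le {n : ℕ}
    {Ω : Set (EucN (n + 1))} (hΩ : IsOpen Ω) (hF : (frontier Ω).Nonempty) {K t₀ : ℝ}
    (hK : 0 ≤ K) (htube : ∀ t ∈ Icc 0 t₀, ∀ x r, volume (boundaryLayer Ω t ∩ closedBall x r) ≤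
      ENNReal.ofReal (K * t) * ENNReal.ofReal (2 * r) ^ n)
    {γ ρ : ℝ} (hγ : γ ∈ Ico 0 1) (hρ : ρ ∈ Ioc 0 t₀) (x : EucN (n + 1)) {r : ℝ}
    (hr : 0 ≤ r) :
    ∫⁻ z in boundaryLayer Ω ρ ∩ closedBall x r, ENNReal.ofReal (bdist Ω z ^ (-γ)) ≤
      ENNReal.ofReal (2 ^ γ * K * 2 ^ n / (1 - 2 ^ (γ - 1)) * ρ ^ (1 - γ) * r ^ n) := by
  refine (setLIntegral_rpow_neg_le hρ.1 hγ (M := K * (2 * r) ^ n) (by positivity)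
    (fun z hz => ⟨bdist_pos hΩ hF hz.1.1, hz.1.2⟩) fun t ht => ?_).trans_eq ?_
  · have hsub : {z ∈ boundaryLayer Ω ρ ∩ closedBall x r | bdist Ω z ≤ t} ⊆
        boundaryLayer Ω t ∩ closedBall x r := fun z hz => ⟨⟨hz.1.1.1, hz.2⟩, hz.1.2⟩
    refine (measure_mono hsub).trans ((htube t ⟨ht.1.le, ht.2.trans hρ.2⟩ x r).trans_eq ?_)
    rw [← ENNReal.ofReal_pow (by positivity), ← ENNReal.ofReal_mul (mul_nonneg hK ht.1.le)]
    ring_nf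
  · rw [mul_pow]
    ring_nf

lemma le_dist_of_mem_boundaryLayer {N : ℕ} {Ω : Set (EucN N)} {ρ : ℝ} {x z : EucN N}
    (hx : 2 * ρ ≤ bdist Ω x) (hz : z ∈ boundaryLayer Ω ρ) : ρ ≤ dist z x := by
  have : bdist Ω x ≤ bdist Ω z + dist x z := infDist_le_infDist_add_dist
  linarith [hz.2, dist_comm x z]

lemma exists_setLIntegral_boundaryLayer_rpow_neg_mul_dist_le {n : ℕ}
    {Ω : Set (EucN (n + 1))} (hΩ : IsBoundedC2Domain Ω) {γ β : ℝ} (hγ : γ ∈ Ico 0 1)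
    (hβ : 0 < β) :
    ∃ C > 0, ∃ ρ₀ > 0, ∀ ρ ∈ Ioo 0 ρ₀, ∀ x, 2 * ρ ≤ bdist Ω x →
      ∫⁻ z in boundaryLayer Ω ρ,
          ENNReal.ofReal (bdist Ω z ^ (-γ)) * ENNReal.ofReal (dist z x ^ (-(n + β))) ≤
        ENNReal.ofReal (C * ρ ^ (1 - γ - β)) := by
  obtain ⟨hΩo, hΩc, hΩb, hC2⟩ := hΩ
  have hF := hΩb.frontier_nonempty hΩc.nonempty
  obtain ⟨K, hK, t₀, ht₀, htube⟩ :=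
    exists_volume_boundaryLayer_inter_closedBall_le hC2 hΩb.isCompact_frontier hF
  have hq₁ : 0 < 1 - (2 : ℝ) ^ (γ - 1) :=
    sub_pos.2 (Real.rpow_lt_one_of_one_lt_of_neg one_lt_two (by linarith [hγ.2]))
  have hq₂ : 0 < 1 - (2 : ℝ) ^ (-β) :=
    sub_pos.2 (Real.rpow_lt_one_of_one_lt_of_neg one_lt_two (by linarith))
  set M := 2 ^ γ * K * 2 ^ n / (1 - 2 ^ (γ - 1))
  have hM : 0 < M := div_pos (by positivity) hq₁
  refine ⟨2 ^ n * M / (1 - 2 ^ (-β)), div_pos (by positivity) hq₂, t₀, ht₀,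
    fun ρ hρ x hx => ?_⟩
  refine (setLIntegral_mul_dist_rpow_neg_le (by fun_prop) hρ.1 hβ
    (mul_nonneg hM.le (Real.rpow_nonneg hρ.1.le _))
    (fun z hz => le_dist_of_mem_boundaryLayer hx hz)
    fun r hr => setLIntegral_boundaryLayer_inter_closedBall_rpow_neg_le hΩo hF hK.le htube hγ
      ⟨hρ.1, hρ.2.le⟩ x (hρ.1.le.trans hr)).trans_eq ?_
  rw [sub_eq_add_neg (1 - γ), Real.rpow_add hρ.1]
  ring_nf

lemma setIntegral_le_of_abs_le_of_setLIntegral_le {α : Type*} [MeasurableSpace α]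
    {μ : Measure α} {A : Set α} {f : α → ℝ} {g : α → ℝ≥0∞} (hg : Measurable g)
    (hfg : ∀ z ∈ A, ENNReal.ofReal |f z| ≤ g z) {B : ℝ} (hB : 0 ≤ B)
    (hgB : ∫⁻ z in A, g z ∂μ ≤ ENNReal.ofReal B) : ∫ z in A, f z ∂μ ≤ B :=
  (Real.le_norm_self _).trans <| (norm_integral_le_lintegral_norm _).trans <|
    ENNReal.toReal_le_of_le_ofReal hB ((setLIntegral_mono hg hfg).trans hgB)

lemma CNs_pos (N : ℕ) {s : ℝ} (hs : s ∈ Ioo (0 : ℝ) 1) : 0 < CNs N s := by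
  have hΓ : Real.Gamma (-s) ≠ 0 := Real.Gamma_ne_zero fun m hm => by
    rcases Nat.eq_zero_or_pos m with rfl | hm1
    · linarith [hs.1, neg_eq_zero.1 (by simpa using hm)]
    · linarith [hs.2, (Nat.one_le_cast (α := ℝ)).2 hm1]
  have hΓ' : 0 < Real.Gamma ((N : ℝ) / 2 + s) :=
    Real.Gamma_pos_of_pos (add_pos_of_nonneg_of_pos (by positivity) hs.1)
  exact div_pos (mul_pos (by positivity) hΓ') (mul_pos (by positivity) (abs_pos.2 hΓ))

/-- Uniform bound for the nonlocal tail of functions controlled by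
`d^{−γ}` integrated near the boundary. -/
theorem boundary_tail_estimate
    (N : ℕ) (hN : 1 ≤ N) (s γ C₀ : ℝ) (hs : s ∈ Set.Ioo (1 / 2 : ℝ) 1)
    (hγ : γ ∈ Set.Ico (0 : ℝ) 1) (hC₀ : 0 < C₀)
    (Ω : Set (EucN N)) (hΩ : IsBoundedC2Domain Ω) :
    ∃ C > (0 : ℝ), ∃ ρ₀ > (0 : ℝ), ∀ ρ ∈ Set.Ioo (0 : ℝ) ρ₀,
      ∀ u : EucN N → ℝ, Measurable u →
        (∀ z ∈ Ω, 0 ≤ u z ∧ u z ≤ C₀ * bdist Ω z ^ (-γ)) →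
        ∀ x ∈ Ω, 2 * ρ < bdist Ω x →
          CNs N s * ∫ z in {z ∈ Ω | bdist Ω z ≤ ρ}, u z * ‖z - x‖ ^ (-((N : ℝ) + 2 * s))
            ≤ C * ρ ^ (-γ - 2 * s) := by
  obtain ⟨n, rfl⟩ : ∃ n, N = n + 1 := ⟨N - 1, by omega⟩
  obtain ⟨C, hC, ρ₀, hρ₀, htail⟩ := exists_setLIntegral_boundaryLayer_rpow_neg_mul_dist_le hΩ hγ
    (by linarith [hs.1] : 0 < 1 + 2 * s)
  have hCNs := CNs_pos (n + 1) ⟨by linarith [hs.1], hs.2⟩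
  refine ⟨CNs (n + 1) s * (C₀ * C), by positivity, ρ₀, hρ₀, fun ρ hρ u _ hu x _ hx => ?_⟩
  have hexp : -(((n + 1 : ℕ) : ℝ) + 2 * s) = -(n + (1 + 2 * s)) := by push_cast; ring
  rw [mul_assoc, show -γ - 2 * s = 1 - γ - (1 + 2 * s) by ring]
  refine mul_le_mul_of_nonneg_left (setIntegral_le_of_abs_le_of_setLIntegral_le
    (g := fun z => ENNReal.ofReal C₀ * (ENNReal.ofReal (bdist Ω z ^ (-γ)) *
      ENNReal.ofReal (dist z x ^ (-(n + (1 + 2 * s))))))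
    (by fun_prop) (fun z hz => ?_) (by have := hρ.1; positivity) ?_) hCNs.le
  · have hd : 0 ≤ bdist Ω z ^ (-γ) := Real.rpow_nonneg infDist_nonneg _
    rw [← ENNReal.ofReal_mul hd, ← ENNReal.ofReal_mul hC₀.le, dist_eq_norm, hexp, ← mul_assoc,
      abs_of_nonneg (mul_nonneg (hu z hz.1).1 (by positivity))]
    exact ENNReal.ofReal_le_ofReal (mul_le_mul_of_nonneg_right (hu z hz.1).2 (by positivity))
  · rw [lintegral_const_mul _ (by fun_prop), mul_assoc, ENNReal.ofReal_mul hC₀.le]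
    exact mul_le_mul_right (htail ρ hρ x hx.le) _
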